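/- Let I be a finite nonempty index set, ρ_i > 0 for i ∈ I, and θ ≥ 0. For each r > 0 let (G_{i,r})_{i∈I} be independent Poisson random variables with respective means ρ_i r. Then limsup_{r→∞} E[exp(θ Σ_{i∈I} max(ρ_i r - G_{i,r}, 0)/√r)] ≤ Π_{i∈I} (exp(ρ_i θ²/2) + 1). -/

import Mathlib

/-!
The joint law is a product measure and the exponent is a sum over coordinates, so for each
fixed `r` the expectation factorises into one Poisson expectation per `i`. For `N` Poisson of
mean `λ` and `u ≥ 0`, `exp (u (λ - N)⁺) ≤ exp (u (λ - N)) + 1`, and the exponential moment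
`E exp (u (λ - N)) = exp (λ (e⁻ᵘ - 1 + u)) ≤ exp (λ u² / 2)`. With `λ = ρᵢ r` and `u = θ / √r`
this is `exp (ρᵢ θ² / 2)`, so the bound holds for every `r > 0`, not only in the limit.
-/

open Filter Finset Real
open scoped ENNReal Nat

universe u v

theorem ENNReal.tsum_pi_prod {ι : Type u} [Fintype ι] {β : ι → Type v}
    (f : ∀ i, β i → ℝ≥0∞) : ∑' g : ∀ i, β i, ∏ i, f i (g i) = ∏ i, ∑' b, f i b := by
  refine Fintype.induction_empty_option (P := fun ι _ => ∀ (β : ι → Type v)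
    (f : ∀ i, β i → ℝ≥0∞), ∑' g : ∀ i, β i, ∏ i, f i (g i) = ∏ i, ∑' b, f i b) ?_ ?_ ?_ ι β f
  · intro α ι _ e ih β f
    let := Fintype.ofEquiv ι e.symm
    rw [← (Equiv.piCongrLeft β e).tsum_eq, ← e.prod_comp]
    simp_rw [← e.prod_comp (fun i => f i _), Equiv.piCongrLeft_apply_apply]
    exact ih (fun a => β (e a)) (fun a => f (e a))
  · intro β f
    simp
  · intro α _ ih β f
    rw [← (Equiv.piOptionEquivProd (β := β)).symm.tsum_eq, ENNReal.tsum_prod']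
    simp_rw [Fintype.prod_option, Equiv.piOptionEquivProd_symm_apply, ENNReal.tsum_mul_left,
      ENNReal.tsum_mul_right, ih]

theorem Real.exp_neg_le_one_sub_add_sq_div_two {t : ℝ} (ht : 0 ≤ t) :
    exp (-t) ≤ 1 - t + t ^ 2 / 2 := by
  let F : ℝ → ℝ := fun y => 1 - y + y ^ 2 / 2 - exp (-y)
  have hF : ∀ y, HasDerivAt F (-1 + y + exp (-y)) y := fun y => by
    refine ((((hasDerivAt_id y).const_sub 1).add ((hasDerivAt_pow 2 y).div_const 2)).sub
      (hasDerivAt_neg y).exp).congr_deriv ?_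
    norm_num
  have hmono : Monotone F := monotone_of_deriv_nonneg (fun y => (hF y).differentiableAt)
    fun y => (hF y).deriv ▸ by linarith [add_one_le_exp (-y)]
  simpa [F] using hmono ht

theorem Real.exp_mul_max_zero_le (u x : ℝ) : exp (u * max x 0) ≤ exp (u * x) + 1 := by
  rcases le_total 0 x with hx | hx
  · rw [max_eq_left hx]
    linarith [exp_pos (u * x)]
  · rw [max_eq_right hx, mul_zero, exp_zero]
    linarith [exp_pos (u * x)]

theorem hasSum_poisson_mul_exp (l t : ℝ) :
    HasSum (fun n : ℕ => exp (-l) * l ^ n / n ! * exp (t * (l - n)))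
      (exp (l * (exp (-t) - 1 + t))) := by
  have h := (NormedSpace.expSeries_div_hasSum_exp (l * exp (-t))).mul_left (exp (-l + t * l))
  rw [← Real.exp_eq_exp_ℝ, ← exp_add] at h
  rw [show l * (exp (-t) - 1 + t) = -l + t * l + l * exp (-t) by ring]
  refine h.congr_fun fun n => ?_
  rw [mul_pow, ← exp_nat_mul, exp_add, mul_sub, sub_eq_add_neg, exp_add, ← neg_mul,
    mul_comm (n : ℝ)]
  ring

theorem poisson_exp_mul_max_zero_le {l u : ℝ} (hl : 0 ≤ l) (hu : 0 ≤ u) :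
    ∑' n : ℕ, ENNReal.ofReal (exp (-l) * l ^ n / n ! * exp (u * max (l - n) 0)) ≤
      ENNReal.ofReal (exp (l * u ^ 2 / 2) + 1) := by
  have hp : ∀ n : ℕ, 0 ≤ exp (-l) * l ^ n / n ! := fun n => by positivity
  have hmoment := hasSum_poisson_mul_exp l u
  have hmass : HasSum (fun n : ℕ => exp (-l) * l ^ n / n !) 1 := by
    simpa using hasSum_poisson_mul_exp l 0
  have hcumulant : l * (exp (-u) - 1 + u) ≤ l * u ^ 2 / 2 := by
    nlinarith [exp_neg_le_one_sub_add_sq_div_two hu]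
  calc ∑' n : ℕ, ENNReal.ofReal (exp (-l) * l ^ n / n ! * exp (u * max (l - n) 0))
      ≤ ∑' n : ℕ, (ENNReal.ofReal (exp (-l) * l ^ n / n ! * exp (u * (l - n))) +
          ENNReal.ofReal (exp (-l) * l ^ n / n !)) := by
        refine ENNReal.tsum_le_tsum fun n => ?_
        rw [← ENNReal.ofReal_add (by positivity) (hp n), ← mul_add_one]
        exact ENNReal.ofReal_le_ofReal
          (mul_le_mul_of_nonneg_left (exp_mul_max_zero_le u _) (hp n))
    _ = ENNReal.ofReal (exp (l * (exp (-u) - 1 + u))) + ENNReal.ofReal 1 := by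
        rw [ENNReal.tsum_add, ← ENNReal.ofReal_tsum_of_nonneg (fun n => by positivity)
          hmoment.summable, ← ENNReal.ofReal_tsum_of_nonneg hp hmass.summable,
          hmoment.tsum_eq, hmass.tsum_eq]
    _ ≤ ENNReal.ofReal (exp (l * u ^ 2 / 2) + 1) := by
        rw [← ENNReal.ofReal_add (exp_pos _).le zero_le_one]
        gcongr

theorem indep_poisson_negative_part_exp_moment_limsup_general {I : Type*} [Fintype I]
    (ρ : I → ℝ) (hρ : ∀ i, 0 < ρ i) (θ : ℝ) (hθ : 0 ≤ θ) :
    limsup (fun r : ℝ =>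
        ∑' g : I → ℕ, ENNReal.ofReal
          ((∏ i, Real.exp (-(ρ i * r)) * (ρ i * r) ^ (g i) / (Nat.factorial (g i) : ℝ)) *
            Real.exp (θ * (∑ i, max (ρ i * r - (g i : ℝ)) 0) / Real.sqrt r)))
      atTop ≤ ENNReal.ofReal (∏ i, (Real.exp (ρ i * θ ^ 2 / 2) + 1)) := by
  refine limsup_le_of_le (by isBoundedDefault) ?_
  filter_upwards [eventually_gt_atTop 0] with r hr
  let F : I → ℕ → ℝ≥0∞ := fun i n => ENNReal.ofReal
    (exp (-(ρ i * r)) * (ρ i * r) ^ n / n ! * exp (θ / √r * max (ρ i * r - n) 0))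
  have hfactor : ∀ g : I → ℕ,
      ENNReal.ofReal ((∏ i, exp (-(ρ i * r)) * (ρ i * r) ^ g i / (g i)!) *
        exp (θ * (∑ i, max (ρ i * r - g i) 0) / √r)) = ∏ i, F i (g i) := fun g => by
    rw [mul_div_right_comm, mul_sum, exp_sum, ← prod_mul_distrib,
      ENNReal.ofReal_prod_of_nonneg fun i _ => by have := mul_pos (hρ i) hr; positivity]
  have hcoord : ∀ i, ∑' n, F i n ≤ ENNReal.ofReal (exp (ρ i * θ ^ 2 / 2) + 1) := fun i => by
    have hvariance : ρ i * r * (θ / √r) ^ 2 / 2 = ρ i * θ ^ 2 / 2 := by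
      rw [div_pow, sq_sqrt hr.le]
      field_simp
    rw [← hvariance]
    exact poisson_exp_mul_max_zero_le (mul_pos (hρ i) hr).le (by positivity)
  calc _ = ∑' g : I → ℕ, ∏ i, F i (g i) := tsum_congr hfactor
    _ = ∏ i, ∑' n, F i n := ENNReal.tsum_pi_prod F
    _ ≤ ∏ i, ENNReal.ofReal (exp (ρ i * θ ^ 2 / 2) + 1) := prod_le_prod' fun i _ => hcoord i
    _ = _ := (ENNReal.ofReal_prod_of_nonneg fun i _ => by positivity).symm

/-- Let `I` be a finite nonempty index set, `ρ_i > 0`, `θ ≥ 0`. For each `r > 0` let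
`(G_{i,r})_{i∈I}` be independent Poisson random variables with means `ρ_i r` (so their joint
law is the product of the Poisson pmfs). Then
`limsup_{r→∞} E[exp(θ Σ_i max(ρ_i r - G_{i,r}, 0)/√r)] ≤ Π_i (exp(ρ_i θ²/2) + 1)`. -/
theorem indep_poisson_negative_part_exp_moment_limsup {I : Type*} [Fintype I] [Nonempty I]
    (ρ : I → ℝ) (hρ : ∀ i, 0 < ρ i) (θ : ℝ) (hθ : 0 ≤ θ) :
    limsup (fun r : ℝ =>
        ∑' g : I → ℕ, ENNReal.ofReal
          ((∏ i, Real.exp (-(ρ i * r)) * (ρ i * r) ^ (g i) / (Nat.factorial (g i) : ℝ)) *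
            Real.exp (θ * (∑ i, max (ρ i * r - (g i : ℝ)) 0) / Real.sqrt r)))
      atTop ≤ ENNReal.ofReal (∏ i, (Real.exp (ρ i * θ ^ 2 / 2) + 1)) :=
  indep_poisson_negative_part_exp_moment_limsup_general ρ hρ θ hθ
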